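/- Let I and J be finite sets of pairwise distinct labels and let σ_l (l ∈ I) and τ_l (l ∈ J) be types in 𝕋. Then ⟨l:σ_l | l ∈ I⟩ ≤ ⟨l:τ_l | l ∈ J⟩ if and only if J ⊆ I and σ_l ≤ τ_l for every l ∈ J. -/
import Mathlib


/-- Intersection and record types `𝕋`. Record types are the types satisfying `IsRec`. -/
inductive Ty where
  | const : Nat → Ty
  | omega : Ty
  | arrow : Ty → Ty → Ty
  | inter : Ty → Ty → Ty
  | empty : Ty
  | fld : Nat → Ty → Ty
  | merge : Ty → Ty → Ty
deriving DecidableEq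

/-- The record types `𝕋_R ⊆ 𝕋`. -/
inductive IsRec : Ty → Prop where
  | empty : IsRec .empty
  | fld (l : Nat) (σ : Ty) : IsRec (.fld l σ)
  | merge {ρ₁ ρ₂ : Ty} : IsRec ρ₁ → IsRec ρ₂ → IsRec (.merge ρ₁ ρ₂)
  | inter {ρ₁ ρ₂ : Ty} : IsRec ρ₁ → IsRec ρ₂ → IsRec (.inter ρ₁ ρ₂)

/-- Subtyping on `𝕋`: the least preorder satisfying the BCD axioms together with
the record and record-merge axioms. -/
inductive TySub : Ty → Ty → Prop where
  | refl (σ : Ty) : TySub σ σ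
  | trans {σ τ υ : Ty} : TySub σ τ → TySub τ υ → TySub σ υ
  | le_omega (σ : Ty) : TySub σ .omega
  | omega_arrow : TySub .omega (.arrow .omega .omega)
  | inter_left (σ τ : Ty) : TySub (.inter σ τ) σ
  | inter_right (σ τ : Ty) : TySub (.inter σ τ) τ
  | le_inter {σ τ₁ τ₂ : Ty} : TySub σ τ₁ → TySub σ τ₂ → TySub σ (.inter τ₁ τ₂)
  | arrow_inter (σ τ₁ τ₂ : Ty) :
      TySub (.inter (.arrow σ τ₁) (.arrow σ τ₂)) (.arrow σ (.inter τ₁ τ₂))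
  | arrow_mono {σ₁ σ₂ τ₁ τ₂ : Ty} : TySub σ₂ σ₁ → TySub τ₁ τ₂ →
      TySub (.arrow σ₁ τ₁) (.arrow σ₂ τ₂)
  | fld_empty (l : Nat) (σ : Ty) : TySub (.fld l σ) .empty
  | fld_inter (l : Nat) (σ τ : Ty) :
      TySub (.inter (.fld l σ) (.fld l τ)) (.fld l (.inter σ τ))
  | fld_mono {σ τ : Ty} (l : Nat) : TySub σ τ → TySub (.fld l σ) (.fld l τ)
  | merge_empty_r {ρ : Ty} : IsRec ρ → TySub (.merge ρ .empty) ρ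
  | merge_empty_r' {ρ : Ty} : IsRec ρ → TySub ρ (.merge ρ .empty)
  | merge_empty_l {ρ : Ty} : IsRec ρ → TySub (.merge .empty ρ) ρ
  | merge_empty_l' {ρ : Ty} : IsRec ρ → TySub ρ (.merge .empty ρ)
  | merge_assoc {ρ₁ ρ₂ ρ₃ : Ty} : IsRec ρ₁ → IsRec ρ₂ → IsRec ρ₃ →
      TySub (.merge (.merge ρ₁ ρ₂) ρ₃) (.merge ρ₁ (.merge ρ₂ ρ₃))
  | merge_assoc' {ρ₁ ρ₂ ρ₃ : Ty} : IsRec ρ₁ → IsRec ρ₂ → IsRec ρ₃ →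
      TySub (.merge ρ₁ (.merge ρ₂ ρ₃)) (.merge (.merge ρ₁ ρ₂) ρ₃)
  | merge_inter {ρ₁ ρ₂ ρ₃ : Ty} : IsRec ρ₁ → IsRec ρ₂ → IsRec ρ₃ →
      TySub (.merge (.inter ρ₁ ρ₂) ρ₃) (.inter (.merge ρ₁ ρ₃) (.merge ρ₂ ρ₃))
  | merge_inter' {ρ₁ ρ₂ ρ₃ : Ty} : IsRec ρ₁ → IsRec ρ₂ → IsRec ρ₃ →
      TySub (.inter (.merge ρ₁ ρ₃) (.merge ρ₂ ρ₃)) (.merge (.inter ρ₁ ρ₂) ρ₃)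
  | fld_absorb {ρ : Ty} (l : Nat) (σ τ : Ty) : IsRec ρ →
      TySub (.merge (.fld l σ) (.inter (.fld l τ) ρ)) (.inter (.fld l τ) ρ)
  | fld_absorb' {ρ : Ty} (l : Nat) (σ τ : Ty) : IsRec ρ →
      TySub (.inter (.fld l τ) ρ) (.merge (.fld l σ) (.inter (.fld l τ) ρ))
  | fld_comm {ρ : Ty} {l l' : Nat} (σ τ : Ty) : l ≠ l' → IsRec ρ →
      TySub (.merge (.fld l σ) (.inter (.fld l' τ) ρ))
          (.inter (.fld l' τ) (.merge (.fld l σ) ρ))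
  | fld_comm' {ρ : Ty} {l l' : Nat} (σ τ : Ty) : l ≠ l' → IsRec ρ →
      TySub (.inter (.fld l' τ) (.merge (.fld l σ) ρ))
          (.merge (.fld l σ) (.inter (.fld l' τ) ρ))
  | merge_mono_l {ρ₁ ρ₂ ρ : Ty} : IsRec ρ₁ → IsRec ρ₂ → IsRec ρ →
      TySub ρ₁ ρ₂ → TySub (.merge ρ₁ ρ) (.merge ρ₂ ρ)
  | merge_congr_r {ρ ρ₁ ρ₂ : Ty} : IsRec ρ → IsRec ρ₁ → IsRec ρ₂ →
      TySub ρ₁ ρ₂ → TySub ρ₂ ρ₁ → TySub (.merge ρ ρ₁) (.merge ρ ρ₂)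

/-- Type equality: mutual subtyping. -/
def TyEq (σ τ : Ty) : Prop := TySub σ τ ∧ TySub τ σ
/-- `⟨l : σ_l | l ∈ I⟩`: the intersection of unary record types over a list of labels. -/
def recTy (σ : Nat → Ty) : List Nat → Ty
  | [] => .empty
  | [l] => .fld l (σ l)
  | l :: l' :: ls => .inter (.fld l (σ l)) (recTy σ (l' :: ls))

/-- Combine two optional field types (intersection semantics). -/
def comb : Option Ty → Option Ty → Option Ty
  | none, b => b
  | some a, none => some a
  | some a, some b => some (.inter a b)

/-- Right-biased override (merge semantics). -/
def ov : Option Ty → Option Ty → Option Ty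
  | a, none => a
  | _, some b => some b

/-- The semantic field content of a type at a label. -/
def G : Ty → Nat → Option Ty
  | .empty, _ => none
  | .fld l s, l' => if l' = l then some s else none
  | .inter s t, l => comb (G s l) (G t l)
  | .merge r₁ r₂, l => ov (G r₁ l) (G r₂ l)
  | _, _ => none

/-- Order on optional field contents: `none` (absent/ω) is top. -/
def OLE (a b : Option Ty) : Prop :=
  match b with
  | none => True
  | some b' => match a with
    | none => False
    | some a' => TySub a' b'

theorem OLE_refl (a : Option Ty) : OLE a a := by
  cases a with
  | none => trivial
  | some a' => exact TySub.refl a'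

theorem OLE_trans {a b c : Option Ty} (h₁ : OLE a b) (h₂ : OLE b c) : OLE a c := by
  cases c with
  | none => trivial
  | some c' =>
    cases b with
    | none => exact absurd h₂ id
    | some b' =>
      cases a with
      | none => exact absurd h₁ id
      | some a' => exact TySub.trans h₁ h₂

/-- Soundness of the field semantics with respect to subtyping. -/
theorem G_sound {s t : Ty} (h : TySub s t) : ∀ l, OLE (G s l) (G t l) := by
  induction h with
  | refl s => exact fun l => OLE_refl _
  | trans _ _ ih₁ ih₂ => exact fun l => OLE_trans (ih₁ l) (ih₂ l)
  | le_omega s => intro l; simp [G, OLE]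
  | omega_arrow => intro l; simp [G, OLE]
  | inter_left s t =>
    intro l
    simp only [G]
    cases hs : G s l with
    | none => cases ht : G t l <;> simp [comb, OLE]
    | some a => cases ht : G t l with
      | none => simpa [comb, OLE] using TySub.refl a
      | some b => simpa [comb, OLE] using TySub.inter_left a b
  | inter_right s t =>
    intro l
    simp only [G]
    cases hs : G s l with
    | none => cases ht : G t l with
      | none => simp [comb, OLE]
      | some b => simpa [comb, OLE] using TySub.refl b
    | some a => cases ht : G t l with
      | none => simp [comb, OLE]
      | some b => simpa [comb, OLE] using TySub.inter_right a b
  | @le_inter s' t1 t2 h₁ h₂ ih₁ ih₂ =>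
    intro l
    have i₁ := ih₁ l
    have i₂ := ih₂ l
    simp only [G]
    cases h1 : G t1 l with
    | none =>
      simpa [comb] using i₂
    | some b =>
      rw [h1] at i₁
      cases h2 : G t2 l with
      | none =>
        simpa [comb, h1] using i₁
      | some c =>
        rw [h2] at i₂
        cases hs : G s' l with
        | none => rw [hs] at i₁; exact absurd i₁ id
        | some a =>
          rw [hs] at i₁ i₂
          simpa [comb, OLE] using TySub.le_inter i₁ i₂
  | arrow_inter s t₁ t₂ => intro l; simp [G, comb, OLE]
  | arrow_mono _ _ _ _ => intro l; simp [G, OLE]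
  | fld_empty l' s => intro l; simp [G, OLE]
  | fld_inter l' s t =>
    intro l
    simp only [G]
    by_cases h : l = l'
    · simpa [h, comb, OLE] using TySub.refl (Ty.inter s t)
    · simp [h, comb, OLE]
  | fld_mono l' h ih =>
    intro l
    simp only [G]
    by_cases hl : l = l'
    · simpa [hl, OLE] using h
    · simp [hl, OLE]
  | merge_empty_r _ => intro l; simp only [G]; cases G _ l <;> simp [ov, OLE, OLE_refl, TySub.refl]
  | merge_empty_r' _ => intro l; simp only [G]; cases G _ l <;> simp [ov, OLE, OLE_refl, TySub.refl]
  | merge_empty_l _ => intro l; simp only [G]; cases G _ l <;> simp [ov, OLE, OLE_refl, TySub.refl]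
  | merge_empty_l' _ => intro l; simp only [G]; cases G _ l <;> simp [ov, OLE, OLE_refl, TySub.refl]
  | merge_assoc _ _ _ =>
    intro l
    simp only [G]
    cases G _ l <;> cases G _ l <;> cases G _ l <;> simp [ov, OLE, TySub.refl]
  | merge_assoc' _ _ _ =>
    intro l
    simp only [G]
    cases G _ l <;> cases G _ l <;> cases G _ l <;> simp [ov, OLE, TySub.refl]
  | merge_inter _ _ _ =>
    intro l
    simp only [G]
    cases G _ l with
    | none =>
      cases G _ l <;> cases G _ l <;>
        simp [ov, comb, OLE, TySub.refl, TySub.le_inter (TySub.refl _) (TySub.refl _)]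
    | some c =>
      cases G _ l <;> cases G _ l <;>
        simp [ov, comb, OLE, TySub.refl, TySub.le_inter (TySub.refl _) (TySub.refl _)]
  | merge_inter' _ _ _ =>
    intro l
    simp only [G]
    cases G _ l <;> cases G _ l <;> cases G _ l <;>
      simp [ov, comb, OLE, TySub.refl, TySub.inter_left]
  | fld_absorb l' s t _ =>
    intro l
    simp only [G]
    by_cases h : l = l' <;> cases G _ l <;> simp [h, ov, comb, OLE, TySub.refl]
  | fld_absorb' l' s t _ =>
    intro l
    simp only [G]
    by_cases h : l = l' <;> cases G _ l <;> simp [h, ov, comb, OLE, TySub.refl]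
  | @fld_comm _ l₁ l₂ s t hne _ =>
    intro l
    simp only [G]
    by_cases h1 : l = l₁ <;> by_cases h2 : l = l₂ <;> cases G _ l <;>
      simp_all [ov, comb, OLE, TySub.refl]
  | @fld_comm' _ l₁ l₂ s t hne _ =>
    intro l
    simp only [G]
    by_cases h1 : l = l₁ <;> by_cases h2 : l = l₂ <;> cases G _ l <;>
      simp_all [ov, comb, OLE, TySub.refl]
  | @merge_mono_l r₁ r₂ r _ _ _ _ ih =>
    intro l
    have i := ih l
    simp only [G]
    cases hr : G r l with
    | none =>
      cases h1 : G r₁ l <;> cases h2 : G r₂ l <;>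
        rw [h1, h2] at i <;> simp_all [ov, OLE]
    | some c => cases G r₁ l <;> cases G r₂ l <;> simp [ov, OLE, TySub.refl]
  | @merge_congr_r r r₁ r₂ _ _ _ _ _ ih₁ ih₂ =>
    intro l
    have i₁ := ih₁ l
    have i₂ := ih₂ l
    simp only [G]
    cases h1 : G r₁ l with
    | none =>
      cases h2 : G r₂ l with
      | none => exact OLE_refl _
      | some b => rw [h1, h2] at i₁; exact absurd i₁ id
    | some a =>
      cases h2 : G r₂ l with
      | none => rw [h1, h2] at i₂; exact absurd i₂ id
      | some b =>
        rw [h1, h2] at i₁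
        cases G r l <;> simpa [ov, OLE] using i₁

theorem G_recTy (σ : Nat → Ty) (I : List Nat) (hI : I.Nodup) (l : Nat) :
    G (recTy σ I) l = if l ∈ I then some (σ l) else none := by
  induction I with
  | nil => simp [recTy, G]
  | cons a ls ih =>
    cases ls with
    | nil => by_cases h : l = a <;> simp [recTy, G, h]
    | cons b ls' =>
      have hne : a ∉ b :: ls' := (List.nodup_cons.mp hI).1
      have ih' := ih (List.nodup_cons.mp hI).2
      by_cases h : l = a
      · subst h
        simp [recTy, G, ih', hne, comb]
      · simp only [recTy, G, ih']
        by_cases hm : l ∈ b :: ls' <;> simp [h, hm, comb]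

theorem recTy_le_empty (σ : Nat → Ty) (I : List Nat) : TySub (recTy σ I) .empty := by
  induction I with
  | nil => exact TySub.refl _
  | cons a ls ih =>
    cases ls with
    | nil => exact TySub.fld_empty a (σ a)
    | cons b ls' =>
      exact TySub.trans (TySub.inter_left _ _) (TySub.fld_empty a (σ a))

theorem recTy_proj (σ : Nat → Ty) {I : List Nat} {l : Nat} (h : l ∈ I) :
    TySub (recTy σ I) (.fld l (σ l)) := by
  induction I with
  | nil => simp at h
  | cons a ls ih =>
    cases ls with
    | nil =>
      simp at h
      subst h
      exact TySub.refl _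
    | cons b ls' =>
      rcases List.mem_cons.mp h with h | h
      · subst h; exact TySub.inter_left _ _
      · exact TySub.trans (TySub.inter_right _ _) (ih h)

theorem recTy_build (τ : Nat → Ty) {X : Ty} {J : List Nat}
    (hE : TySub X .empty) (h : ∀ l ∈ J, TySub X (.fld l (τ l))) :
    TySub X (recTy τ J) := by
  induction J with
  | nil => exact hE
  | cons a ls ih =>
    cases ls with
    | nil => exact h a (by simp)
    | cons b ls' =>
      exact TySub.le_inter (h a (by simp))
        (ih fun l hl => h l (List.mem_cons_of_mem _ hl))

/-- Subtyping between intersections of unary record types is width and depth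
subtyping: `⟨l:σ_l | l ∈ I⟩ ≤ ⟨l:τ_l | l ∈ J⟩` iff `J ⊆ I` and `σ_l ≤ τ_l` for all `l ∈ J`. -/
theorem record_subtyping (I J : List Nat) (hI : I.Nodup) (hJ : J.Nodup)
    (σ τ : Nat → Ty) :
    TySub (recTy σ I) (recTy τ J) ↔ (J ⊆ I ∧ ∀ l ∈ J, TySub (σ l) (τ l)) := by
  constructor
  · intro h
    have key : ∀ l ∈ J, l ∈ I ∧ TySub (σ l) (τ l) := by
      intro l hl
      have hs := G_sound h l
      rw [G_recTy σ I hI l, G_recTy τ J hJ l] at hs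
      simp only [hl, if_true] at hs
      by_cases hi : l ∈ I
      · simp only [hi, if_true] at hs
        exact ⟨hi, hs⟩
      · simp only [hi, if_false] at hs
        exact absurd hs id
    exact ⟨fun l hl => (key l hl).1, fun l hl => (key l hl).2⟩
  · rintro ⟨hJI, hsub⟩
    refine recTy_build τ (recTy_le_empty σ I) fun l hl => ?_
    exact TySub.trans (recTy_proj σ (hJI hl)) (TySub.fld_mono l (hsub l hl))
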